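/- The 3-sphere (11¹₃₅) with facet list F0={2,4,7,9}, F1={0,4,6,7,10}, F2={0,3,4,7,9}, F3={1,3,5,8,10}, F4={0,3,5,7,10}, F5={1,4,6,8,10}, F6={0,2,4,6,8,9}, F7={1,2,5,6,8,9}, F8={1,2,3,5,7,9}, F9={0,1,3,6,9,10}, F10={2,4,5,7,8,10} (subsets of Fin 11) has no polytopal realization; i.e., there is no injective v : Fin 11 → ℝ⁴ such that every v j is an extreme point of P = convexHull ℝ (Set.range v) and the set of facets (3-dimensional proper faces) of P equals { convexHull ℝ (v '' F_i) : 0 ≤ i ≤ 10 }. -/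
import Mathlib

set_option maxHeartbeats 1000000 in
open Module in
private lemma col_dep_aux (φ : Fin 6 → (EuclideanSpace ℝ (Fin 4) →L[ℝ] ℝ)) (t : Fin 6 → ℝ)
    (p : Fin 6 → EuclideanSpace ℝ (Fin 4)) :
    ∃ h : Fin 6 → ℝ, (∃ l, h l ≠ 0) ∧ ∀ k, ∑ l : Fin 6, h l * (φ k (p l) - t k) = 0 := by
  classical
  set u : Fin 6 → (Fin 6 → ℝ) := fun l k => φ k (p l) - t k with hu
  let Ψ : (EuclideanSpace ℝ (Fin 4) × ℝ) →ₗ[ℝ] (Fin 6 → ℝ) :=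
    { toFun := fun ys => fun k => φ k ys.1 - ys.2 * t k
      map_add' := by
        intro x y; funext k
        simp only [Prod.fst_add, Prod.snd_add, map_add, Pi.add_apply]
        ring
      map_smul' := by
        intro c x; funext k
        simp only [Prod.smul_fst, Prod.smul_snd, smul_eq_mul, RingHom.id_apply, Pi.smul_apply,
          map_smul]
        ring }
  have hmem : ∀ l, u l ∈ LinearMap.range Ψ := by
    intro l
    refine ⟨(p l, 1), ?_⟩
    funext k
    show φ k (p l) - 1 * t k = φ k (p l) - t k
    ring
  have hdep : ¬ LinearIndependent ℝ u := by
    intro hind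
    have h1 : Submodule.span ℝ (Set.range u) ≤ LinearMap.range Ψ :=
      Submodule.span_le.2 (by rintro _ ⟨l, rfl⟩; exact hmem l)
    have h2 := Submodule.finrank_mono h1
    rw [finrank_span_eq_card hind] at h2
    have h3 : finrank ℝ (LinearMap.range Ψ) ≤ finrank ℝ (EuclideanSpace ℝ (Fin 4) × ℝ) :=
      LinearMap.finrank_range_le Ψ
    have h4 : finrank ℝ (EuclideanSpace ℝ (Fin 4) × ℝ) = 5 := by
      simp [Module.finrank_prod]
    simp at h2
    omega
  obtain ⟨g, hg, l0, hl0⟩ := Fintype.not_linearIndependent_iff.1 hdep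
  refine ⟨g, ⟨l0, hl0⟩, ?_⟩
  intro k
  have hk := congrFun hg k
  simpa [Finset.sum_apply, hu, smul_eq_mul] using hk

private lemma key_ineq1 (p q r s t u w2 : ℝ) (hp : p < 0) (hq : q < 0) (hr : r < 0)
    (hs : s < 0) (h : p * t * s - q * r * s - u * p * w2 = 0) : u * w2 < s * t := by
  nlinarith [h, mul_neg_of_pos_of_neg (mul_pos_of_neg_of_neg hq hr) hs, hp]

private lemma key_ineq2 (a b c d e f g h8 i j : ℝ) (hb : b < 0) (hc : c < 0) (hd : d < 0)
    (he : e < 0) (hf : f < 0) (hg : g < 0) (hh : h8 < 0)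
    (h : a * b * c * d - e * f * c * d - g * h8 * b * d - i * j * b * c = 0) :
    j * i < d * a := by
  nlinarith [h, mul_pos_of_neg_of_neg hb hc,
    mul_pos (mul_pos_of_neg_of_neg he hf) (mul_pos_of_neg_of_neg hc hd),
    mul_pos (mul_pos_of_neg_of_neg hg hh) (mul_pos_of_neg_of_neg hb hd)]

private lemma key_ineq4 (b01 b18 b36 b74 b610 b06 b34 b710 b61 b08 b11 b010 : ℝ)
    (h18 : b18 < 0) (h36 : b36 < 0) (h74 : b74 < 0) (h06 : b06 < 0) (h34 : b34 < 0)
    (h710 : b710 < 0) (h61 : b61 < 0) (h08 : b08 < 0) (h11 : b11 < 0) (h610 : b610 < 0)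
    (h : b01 * b18 * b36 * b74 * b610 - b06 * b34 * b710 * b61 * b18
      - b08 * b11 * b36 * b74 * b610 - b010 * b18 * b36 * b74 * b61 = 0) :
    b010 * b61 < b01 * b610 := by
  nlinarith [h, mul_neg_of_pos_of_neg (mul_pos_of_neg_of_neg h18 h36) h74,
    mul_neg_of_pos_of_neg (mul_pos (mul_pos_of_neg_of_neg h06 h34) (mul_pos_of_neg_of_neg h710 h61)) h18,
    mul_neg_of_pos_of_neg (mul_pos (mul_pos_of_neg_of_neg h08 h11) (mul_pos_of_neg_of_neg h36 h74)) h610]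

open Module

/-- The facet list of the 3-sphere `(11¹₃₅)`. -/
def facets : Fin 11 → Set (Fin 11) :=
  ![{2,4,7,9}, {0,4,6,7,10}, {0,3,4,7,9}, {1,3,5,8,10}, {0,3,5,7,10},
    {1,4,6,8,10}, {0,2,4,6,8,9}, {1,2,5,6,8,9}, {1,2,3,5,7,9}, {0,1,3,6,9,10},
    {2,4,5,7,8,10}]

set_option maxHeartbeats 2000000 in
/-- The 3-sphere `(11¹₃₅)` has no polytopal realization. -/
theorem sphere_11_35_35_11_b_not_polytopal :
    ¬ ∃ v : Fin 11 → EuclideanSpace ℝ (Fin 4),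
      Function.Injective v ∧
      (∀ j, v j ∈ convexHull ℝ (Set.range v) ∧
        v j ∉ convexHull ℝ (convexHull ℝ (Set.range v) \ {v j})) ∧
      {F : Set (EuclideanSpace ℝ (Fin 4)) |
          F ≠ ∅ ∧ F ≠ convexHull ℝ (Set.range v) ∧
          IsExposed ℝ (convexHull ℝ (Set.range v)) F ∧
          finrank ℝ (vectorSpan ℝ F) = 3} =
        Set.range (fun i : Fin 11 => convexHull ℝ (v '' facets i)) := by
  rintro ⟨v, hv, hext, hfac⟩
  have hvP : ∀ j : Fin 11, v j ∈ convexHull ℝ (Set.range v) :=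
    fun j => subset_convexHull ℝ _ ⟨j, rfl⟩
  have main : ∀ i : Fin 11, ∃ l : EuclideanSpace ℝ (Fin 4) →L[ℝ] ℝ, ∃ c : ℝ,
      (∀ j, j ∈ facets i → l (v j) = c) ∧ (∀ j, j ∉ facets i → l (v j) < c) := by
    intro i
    have hmem : convexHull ℝ (v '' facets i) ∈ {F : Set (EuclideanSpace ℝ (Fin 4)) |
        F ≠ ∅ ∧ F ≠ convexHull ℝ (Set.range v) ∧
        IsExposed ℝ (convexHull ℝ (Set.range v)) F ∧
        finrank ℝ (vectorSpan ℝ F) = 3} := by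
      rw [hfac]; exact ⟨i, rfl⟩
    obtain ⟨hne, -, hexp, -⟩ := hmem
    have hnE : (convexHull ℝ (v '' facets i)).Nonempty := Set.nonempty_iff_ne_empty.2 hne
    obtain ⟨l, hl⟩ := hexp hnE
    have himg : (v '' facets i).Nonempty := convexHull_nonempty_iff.1 hnE
    obtain ⟨y, hy⟩ := himg
    obtain ⟨a, ha, rfl⟩ := hy
    have hmax : ∀ y ∈ convexHull ℝ (Set.range v), l y ≤ l (v a) := by
      have hva : v a ∈ convexHull ℝ (v '' facets i) :=
        subset_convexHull ℝ _ (Set.mem_image_of_mem v ha)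
      rw [hl] at hva
      exact hva.2
    refine ⟨l, l (v a), ?_, ?_⟩
    · intro j hj
      have hvj : v j ∈ convexHull ℝ (v '' facets i) :=
        subset_convexHull ℝ _ (Set.mem_image_of_mem v hj)
      rw [hl] at hvj
      exact le_antisymm (hmax _ hvj.1) (hvj.2 _ (hvP a))
    · intro j hj
      rcases lt_or_eq_of_le (hmax (v j) (hvP j)) with hlt | heqq
      · exact hlt
      exfalso
      have hjF : v j ∈ convexHull ℝ (v '' facets i) := by
        rw [hl]
        exact ⟨hvP j, fun y hy => le_of_le_of_eq (hmax y hy) heqq.symm⟩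
      have hsub : v '' facets i ⊆ convexHull ℝ (Set.range v) \ {v j} := by
        rintro _ ⟨j2, hj2, rfl⟩
        refine ⟨hvP j2, ?_⟩
        simp only [Set.mem_singleton_iff]
        intro hEq
        exact hj (hv hEq ▸ hj2)
      exact (hext j).2 (convexHull_mono hsub hjF)
  choose L C hzero hneg using main
  have hF0 : facets 0 = ({2,4,7,9} : Set (Fin 11)) := rfl
  have hF1 : facets 1 = ({0,4,6,7,10} : Set (Fin 11)) := rfl
  have hF2 : facets 2 = ({0,3,4,7,9} : Set (Fin 11)) := rfl
  have hF3 : facets 3 = ({1,3,5,8,10} : Set (Fin 11)) := rfl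
  have hF4 : facets 4 = ({0,3,5,7,10} : Set (Fin 11)) := rfl
  have hF5 : facets 5 = ({1,4,6,8,10} : Set (Fin 11)) := rfl
  have hF6 : facets 6 = ({0,2,4,6,8,9} : Set (Fin 11)) := rfl
  have hF7 : facets 7 = ({1,2,5,6,8,9} : Set (Fin 11)) := rfl
  have hF8 : facets 8 = ({1,2,3,5,7,9} : Set (Fin 11)) := rfl
  have hF9 : facets 9 = ({0,1,3,6,9,10} : Set (Fin 11)) := rfl
  have hF10 : facets 10 = ({2,4,5,7,8,10} : Set (Fin 11)) := rfl
  have hq_0_2 : L 0 (v 2) - C 0 = 0 := sub_eq_zero_of_eq (hzero 0 2 (by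
    rw [hF0]; simp only [Set.mem_insert_iff, Set.mem_singleton_iff]; decide))
  have hq_0_4 : L 0 (v 4) - C 0 = 0 := sub_eq_zero_of_eq (hzero 0 4 (by
    rw [hF0]; simp only [Set.mem_insert_iff, Set.mem_singleton_iff]; decide))
  have hq_0_7 : L 0 (v 7) - C 0 = 0 := sub_eq_zero_of_eq (hzero 0 7 (by
    rw [hF0]; simp only [Set.mem_insert_iff, Set.mem_singleton_iff]; decide))
  have hq_0_9 : L 0 (v 9) - C 0 = 0 := sub_eq_zero_of_eq (hzero 0 9 (by
    rw [hF0]; simp only [Set.mem_insert_iff, Set.mem_singleton_iff]; decide))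
  have hq_1_0 : L 1 (v 0) - C 1 = 0 := sub_eq_zero_of_eq (hzero 1 0 (by
    rw [hF1]; simp only [Set.mem_insert_iff, Set.mem_singleton_iff]; decide))
  have hq_1_4 : L 1 (v 4) - C 1 = 0 := sub_eq_zero_of_eq (hzero 1 4 (by
    rw [hF1]; simp only [Set.mem_insert_iff, Set.mem_singleton_iff]; decide))
  have hq_1_6 : L 1 (v 6) - C 1 = 0 := sub_eq_zero_of_eq (hzero 1 6 (by
    rw [hF1]; simp only [Set.mem_insert_iff, Set.mem_singleton_iff]; decide))
  have hq_1_7 : L 1 (v 7) - C 1 = 0 := sub_eq_zero_of_eq (hzero 1 7 (by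
    rw [hF1]; simp only [Set.mem_insert_iff, Set.mem_singleton_iff]; decide))
  have hq_1_10 : L 1 (v 10) - C 1 = 0 := sub_eq_zero_of_eq (hzero 1 10 (by
    rw [hF1]; simp only [Set.mem_insert_iff, Set.mem_singleton_iff]; decide))
  have hq_2_0 : L 2 (v 0) - C 2 = 0 := sub_eq_zero_of_eq (hzero 2 0 (by
    rw [hF2]; simp only [Set.mem_insert_iff, Set.mem_singleton_iff]; decide))
  have hq_2_3 : L 2 (v 3) - C 2 = 0 := sub_eq_zero_of_eq (hzero 2 3 (by
    rw [hF2]; simp only [Set.mem_insert_iff, Set.mem_singleton_iff]; decide))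
  have hq_2_4 : L 2 (v 4) - C 2 = 0 := sub_eq_zero_of_eq (hzero 2 4 (by
    rw [hF2]; simp only [Set.mem_insert_iff, Set.mem_singleton_iff]; decide))
  have hq_2_7 : L 2 (v 7) - C 2 = 0 := sub_eq_zero_of_eq (hzero 2 7 (by
    rw [hF2]; simp only [Set.mem_insert_iff, Set.mem_singleton_iff]; decide))
  have hq_2_9 : L 2 (v 9) - C 2 = 0 := sub_eq_zero_of_eq (hzero 2 9 (by
    rw [hF2]; simp only [Set.mem_insert_iff, Set.mem_singleton_iff]; decide))
  have hq_3_1 : L 3 (v 1) - C 3 = 0 := sub_eq_zero_of_eq (hzero 3 1 (by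
    rw [hF3]; simp only [Set.mem_insert_iff, Set.mem_singleton_iff]; decide))
  have hq_3_5 : L 3 (v 5) - C 3 = 0 := sub_eq_zero_of_eq (hzero 3 5 (by
    rw [hF3]; simp only [Set.mem_insert_iff, Set.mem_singleton_iff]; decide))
  have hq_3_8 : L 3 (v 8) - C 3 = 0 := sub_eq_zero_of_eq (hzero 3 8 (by
    rw [hF3]; simp only [Set.mem_insert_iff, Set.mem_singleton_iff]; decide))
  have hq_3_10 : L 3 (v 10) - C 3 = 0 := sub_eq_zero_of_eq (hzero 3 10 (by
    rw [hF3]; simp only [Set.mem_insert_iff, Set.mem_singleton_iff]; decide))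
  have hq_4_0 : L 4 (v 0) - C 4 = 0 := sub_eq_zero_of_eq (hzero 4 0 (by
    rw [hF4]; simp only [Set.mem_insert_iff, Set.mem_singleton_iff]; decide))
  have hq_4_3 : L 4 (v 3) - C 4 = 0 := sub_eq_zero_of_eq (hzero 4 3 (by
    rw [hF4]; simp only [Set.mem_insert_iff, Set.mem_singleton_iff]; decide))
  have hq_4_5 : L 4 (v 5) - C 4 = 0 := sub_eq_zero_of_eq (hzero 4 5 (by
    rw [hF4]; simp only [Set.mem_insert_iff, Set.mem_singleton_iff]; decide))
  have hq_4_7 : L 4 (v 7) - C 4 = 0 := sub_eq_zero_of_eq (hzero 4 7 (by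
    rw [hF4]; simp only [Set.mem_insert_iff, Set.mem_singleton_iff]; decide))
  have hq_4_10 : L 4 (v 10) - C 4 = 0 := sub_eq_zero_of_eq (hzero 4 10 (by
    rw [hF4]; simp only [Set.mem_insert_iff, Set.mem_singleton_iff]; decide))
  have hq_5_1 : L 5 (v 1) - C 5 = 0 := sub_eq_zero_of_eq (hzero 5 1 (by
    rw [hF5]; simp only [Set.mem_insert_iff, Set.mem_singleton_iff]; decide))
  have hq_5_4 : L 5 (v 4) - C 5 = 0 := sub_eq_zero_of_eq (hzero 5 4 (by
    rw [hF5]; simp only [Set.mem_insert_iff, Set.mem_singleton_iff]; decide))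
  have hq_5_6 : L 5 (v 6) - C 5 = 0 := sub_eq_zero_of_eq (hzero 5 6 (by
    rw [hF5]; simp only [Set.mem_insert_iff, Set.mem_singleton_iff]; decide))
  have hq_5_8 : L 5 (v 8) - C 5 = 0 := sub_eq_zero_of_eq (hzero 5 8 (by
    rw [hF5]; simp only [Set.mem_insert_iff, Set.mem_singleton_iff]; decide))
  have hq_5_10 : L 5 (v 10) - C 5 = 0 := sub_eq_zero_of_eq (hzero 5 10 (by
    rw [hF5]; simp only [Set.mem_insert_iff, Set.mem_singleton_iff]; decide))
  have hq_6_0 : L 6 (v 0) - C 6 = 0 := sub_eq_zero_of_eq (hzero 6 0 (by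
    rw [hF6]; simp only [Set.mem_insert_iff, Set.mem_singleton_iff]; decide))
  have hq_6_2 : L 6 (v 2) - C 6 = 0 := sub_eq_zero_of_eq (hzero 6 2 (by
    rw [hF6]; simp only [Set.mem_insert_iff, Set.mem_singleton_iff]; decide))
  have hq_6_4 : L 6 (v 4) - C 6 = 0 := sub_eq_zero_of_eq (hzero 6 4 (by
    rw [hF6]; simp only [Set.mem_insert_iff, Set.mem_singleton_iff]; decide))
  have hq_6_6 : L 6 (v 6) - C 6 = 0 := sub_eq_zero_of_eq (hzero 6 6 (by
    rw [hF6]; simp only [Set.mem_insert_iff, Set.mem_singleton_iff]; decide))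
  have hq_6_8 : L 6 (v 8) - C 6 = 0 := sub_eq_zero_of_eq (hzero 6 8 (by
    rw [hF6]; simp only [Set.mem_insert_iff, Set.mem_singleton_iff]; decide))
  have hq_6_9 : L 6 (v 9) - C 6 = 0 := sub_eq_zero_of_eq (hzero 6 9 (by
    rw [hF6]; simp only [Set.mem_insert_iff, Set.mem_singleton_iff]; decide))
  have hq_7_1 : L 7 (v 1) - C 7 = 0 := sub_eq_zero_of_eq (hzero 7 1 (by
    rw [hF7]; simp only [Set.mem_insert_iff, Set.mem_singleton_iff]; decide))
  have hq_7_2 : L 7 (v 2) - C 7 = 0 := sub_eq_zero_of_eq (hzero 7 2 (by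
    rw [hF7]; simp only [Set.mem_insert_iff, Set.mem_singleton_iff]; decide))
  have hq_7_5 : L 7 (v 5) - C 7 = 0 := sub_eq_zero_of_eq (hzero 7 5 (by
    rw [hF7]; simp only [Set.mem_insert_iff, Set.mem_singleton_iff]; decide))
  have hq_7_6 : L 7 (v 6) - C 7 = 0 := sub_eq_zero_of_eq (hzero 7 6 (by
    rw [hF7]; simp only [Set.mem_insert_iff, Set.mem_singleton_iff]; decide))
  have hq_7_8 : L 7 (v 8) - C 7 = 0 := sub_eq_zero_of_eq (hzero 7 8 (by
    rw [hF7]; simp only [Set.mem_insert_iff, Set.mem_singleton_iff]; decide))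
  have hq_7_9 : L 7 (v 9) - C 7 = 0 := sub_eq_zero_of_eq (hzero 7 9 (by
    rw [hF7]; simp only [Set.mem_insert_iff, Set.mem_singleton_iff]; decide))
  have hq_8_1 : L 8 (v 1) - C 8 = 0 := sub_eq_zero_of_eq (hzero 8 1 (by
    rw [hF8]; simp only [Set.mem_insert_iff, Set.mem_singleton_iff]; decide))
  have hq_8_2 : L 8 (v 2) - C 8 = 0 := sub_eq_zero_of_eq (hzero 8 2 (by
    rw [hF8]; simp only [Set.mem_insert_iff, Set.mem_singleton_iff]; decide))
  have hq_8_3 : L 8 (v 3) - C 8 = 0 := sub_eq_zero_of_eq (hzero 8 3 (by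
    rw [hF8]; simp only [Set.mem_insert_iff, Set.mem_singleton_iff]; decide))
  have hq_8_5 : L 8 (v 5) - C 8 = 0 := sub_eq_zero_of_eq (hzero 8 5 (by
    rw [hF8]; simp only [Set.mem_insert_iff, Set.mem_singleton_iff]; decide))
  have hq_8_9 : L 8 (v 9) - C 8 = 0 := sub_eq_zero_of_eq (hzero 8 9 (by
    rw [hF8]; simp only [Set.mem_insert_iff, Set.mem_singleton_iff]; decide))
  have hq_9_0 : L 9 (v 0) - C 9 = 0 := sub_eq_zero_of_eq (hzero 9 0 (by
    rw [hF9]; simp only [Set.mem_insert_iff, Set.mem_singleton_iff]; decide))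
  have hq_9_1 : L 9 (v 1) - C 9 = 0 := sub_eq_zero_of_eq (hzero 9 1 (by
    rw [hF9]; simp only [Set.mem_insert_iff, Set.mem_singleton_iff]; decide))
  have hq_9_3 : L 9 (v 3) - C 9 = 0 := sub_eq_zero_of_eq (hzero 9 3 (by
    rw [hF9]; simp only [Set.mem_insert_iff, Set.mem_singleton_iff]; decide))
  have hq_9_10 : L 9 (v 10) - C 9 = 0 := sub_eq_zero_of_eq (hzero 9 10 (by
    rw [hF9]; simp only [Set.mem_insert_iff, Set.mem_singleton_iff]; decide))
  have hq_10_2 : L 10 (v 2) - C 10 = 0 := sub_eq_zero_of_eq (hzero 10 2 (by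
    rw [hF10]; simp only [Set.mem_insert_iff, Set.mem_singleton_iff]; decide))
  have hq_10_4 : L 10 (v 4) - C 10 = 0 := sub_eq_zero_of_eq (hzero 10 4 (by
    rw [hF10]; simp only [Set.mem_insert_iff, Set.mem_singleton_iff]; decide))
  have hq_10_5 : L 10 (v 5) - C 10 = 0 := sub_eq_zero_of_eq (hzero 10 5 (by
    rw [hF10]; simp only [Set.mem_insert_iff, Set.mem_singleton_iff]; decide))
  have hq_10_7 : L 10 (v 7) - C 10 = 0 := sub_eq_zero_of_eq (hzero 10 7 (by
    rw [hF10]; simp only [Set.mem_insert_iff, Set.mem_singleton_iff]; decide))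
  have hq_10_10 : L 10 (v 10) - C 10 = 0 := sub_eq_zero_of_eq (hzero 10 10 (by
    rw [hF10]; simp only [Set.mem_insert_iff, Set.mem_singleton_iff]; decide))
  have hn_0_0 : L 0 (v 0) - C 0 < 0 := sub_neg.mpr (hneg 0 0 (by
    rw [hF0]; simp only [Set.mem_insert_iff, Set.mem_singleton_iff]; decide))
  have hn_0_1 : L 0 (v 1) - C 0 < 0 := sub_neg.mpr (hneg 0 1 (by
    rw [hF0]; simp only [Set.mem_insert_iff, Set.mem_singleton_iff]; decide))
  have hn_0_3 : L 0 (v 3) - C 0 < 0 := sub_neg.mpr (hneg 0 3 (by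
    rw [hF0]; simp only [Set.mem_insert_iff, Set.mem_singleton_iff]; decide))
  have hn_0_5 : L 0 (v 5) - C 0 < 0 := sub_neg.mpr (hneg 0 5 (by
    rw [hF0]; simp only [Set.mem_insert_iff, Set.mem_singleton_iff]; decide))
  have hn_0_6 : L 0 (v 6) - C 0 < 0 := sub_neg.mpr (hneg 0 6 (by
    rw [hF0]; simp only [Set.mem_insert_iff, Set.mem_singleton_iff]; decide))
  have hn_0_8 : L 0 (v 8) - C 0 < 0 := sub_neg.mpr (hneg 0 8 (by
    rw [hF0]; simp only [Set.mem_insert_iff, Set.mem_singleton_iff]; decide))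
  have hn_0_10 : L 0 (v 10) - C 0 < 0 := sub_neg.mpr (hneg 0 10 (by
    rw [hF0]; simp only [Set.mem_insert_iff, Set.mem_singleton_iff]; decide))
  have hn_1_1 : L 1 (v 1) - C 1 < 0 := sub_neg.mpr (hneg 1 1 (by
    rw [hF1]; simp only [Set.mem_insert_iff, Set.mem_singleton_iff]; decide))
  have hn_1_2 : L 1 (v 2) - C 1 < 0 := sub_neg.mpr (hneg 1 2 (by
    rw [hF1]; simp only [Set.mem_insert_iff, Set.mem_singleton_iff]; decide))
  have hn_1_3 : L 1 (v 3) - C 1 < 0 := sub_neg.mpr (hneg 1 3 (by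
    rw [hF1]; simp only [Set.mem_insert_iff, Set.mem_singleton_iff]; decide))
  have hn_1_5 : L 1 (v 5) - C 1 < 0 := sub_neg.mpr (hneg 1 5 (by
    rw [hF1]; simp only [Set.mem_insert_iff, Set.mem_singleton_iff]; decide))
  have hn_1_8 : L 1 (v 8) - C 1 < 0 := sub_neg.mpr (hneg 1 8 (by
    rw [hF1]; simp only [Set.mem_insert_iff, Set.mem_singleton_iff]; decide))
  have hn_1_9 : L 1 (v 9) - C 1 < 0 := sub_neg.mpr (hneg 1 9 (by
    rw [hF1]; simp only [Set.mem_insert_iff, Set.mem_singleton_iff]; decide))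
  have hn_2_1 : L 2 (v 1) - C 2 < 0 := sub_neg.mpr (hneg 2 1 (by
    rw [hF2]; simp only [Set.mem_insert_iff, Set.mem_singleton_iff]; decide))
  have hn_2_2 : L 2 (v 2) - C 2 < 0 := sub_neg.mpr (hneg 2 2 (by
    rw [hF2]; simp only [Set.mem_insert_iff, Set.mem_singleton_iff]; decide))
  have hn_2_5 : L 2 (v 5) - C 2 < 0 := sub_neg.mpr (hneg 2 5 (by
    rw [hF2]; simp only [Set.mem_insert_iff, Set.mem_singleton_iff]; decide))
  have hn_2_10 : L 2 (v 10) - C 2 < 0 := sub_neg.mpr (hneg 2 10 (by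
    rw [hF2]; simp only [Set.mem_insert_iff, Set.mem_singleton_iff]; decide))
  have hn_3_0 : L 3 (v 0) - C 3 < 0 := sub_neg.mpr (hneg 3 0 (by
    rw [hF3]; simp only [Set.mem_insert_iff, Set.mem_singleton_iff]; decide))
  have hn_3_2 : L 3 (v 2) - C 3 < 0 := sub_neg.mpr (hneg 3 2 (by
    rw [hF3]; simp only [Set.mem_insert_iff, Set.mem_singleton_iff]; decide))
  have hn_3_4 : L 3 (v 4) - C 3 < 0 := sub_neg.mpr (hneg 3 4 (by
    rw [hF3]; simp only [Set.mem_insert_iff, Set.mem_singleton_iff]; decide))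
  have hn_3_6 : L 3 (v 6) - C 3 < 0 := sub_neg.mpr (hneg 3 6 (by
    rw [hF3]; simp only [Set.mem_insert_iff, Set.mem_singleton_iff]; decide))
  have hn_3_7 : L 3 (v 7) - C 3 < 0 := sub_neg.mpr (hneg 3 7 (by
    rw [hF3]; simp only [Set.mem_insert_iff, Set.mem_singleton_iff]; decide))
  have hn_4_1 : L 4 (v 1) - C 4 < 0 := sub_neg.mpr (hneg 4 1 (by
    rw [hF4]; simp only [Set.mem_insert_iff, Set.mem_singleton_iff]; decide))
  have hn_4_2 : L 4 (v 2) - C 4 < 0 := sub_neg.mpr (hneg 4 2 (by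
    rw [hF4]; simp only [Set.mem_insert_iff, Set.mem_singleton_iff]; decide))
  have hn_4_4 : L 4 (v 4) - C 4 < 0 := sub_neg.mpr (hneg 4 4 (by
    rw [hF4]; simp only [Set.mem_insert_iff, Set.mem_singleton_iff]; decide))
  have hn_5_0 : L 5 (v 0) - C 5 < 0 := sub_neg.mpr (hneg 5 0 (by
    rw [hF5]; simp only [Set.mem_insert_iff, Set.mem_singleton_iff]; decide))
  have hn_6_1 : L 6 (v 1) - C 6 < 0 := sub_neg.mpr (hneg 6 1 (by
    rw [hF6]; simp only [Set.mem_insert_iff, Set.mem_singleton_iff]; decide))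
  have hn_6_3 : L 6 (v 3) - C 6 < 0 := sub_neg.mpr (hneg 6 3 (by
    rw [hF6]; simp only [Set.mem_insert_iff, Set.mem_singleton_iff]; decide))
  have hn_6_5 : L 6 (v 5) - C 6 < 0 := sub_neg.mpr (hneg 6 5 (by
    rw [hF6]; simp only [Set.mem_insert_iff, Set.mem_singleton_iff]; decide))
  have hn_6_7 : L 6 (v 7) - C 6 < 0 := sub_neg.mpr (hneg 6 7 (by
    rw [hF6]; simp only [Set.mem_insert_iff, Set.mem_singleton_iff]; decide))
  have hn_6_10 : L 6 (v 10) - C 6 < 0 := sub_neg.mpr (hneg 6 10 (by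
    rw [hF6]; simp only [Set.mem_insert_iff, Set.mem_singleton_iff]; decide))
  have hn_7_0 : L 7 (v 0) - C 7 < 0 := sub_neg.mpr (hneg 7 0 (by
    rw [hF7]; simp only [Set.mem_insert_iff, Set.mem_singleton_iff]; decide))
  have hn_7_3 : L 7 (v 3) - C 7 < 0 := sub_neg.mpr (hneg 7 3 (by
    rw [hF7]; simp only [Set.mem_insert_iff, Set.mem_singleton_iff]; decide))
  have hn_7_4 : L 7 (v 4) - C 7 < 0 := sub_neg.mpr (hneg 7 4 (by
    rw [hF7]; simp only [Set.mem_insert_iff, Set.mem_singleton_iff]; decide))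
  have hn_7_10 : L 7 (v 10) - C 7 < 0 := sub_neg.mpr (hneg 7 10 (by
    rw [hF7]; simp only [Set.mem_insert_iff, Set.mem_singleton_iff]; decide))
  have hn_8_0 : L 8 (v 0) - C 8 < 0 := sub_neg.mpr (hneg 8 0 (by
    rw [hF8]; simp only [Set.mem_insert_iff, Set.mem_singleton_iff]; decide))
  have hn_9_5 : L 9 (v 5) - C 9 < 0 := sub_neg.mpr (hneg 9 5 (by
    rw [hF9]; simp only [Set.mem_insert_iff, Set.mem_singleton_iff]; decide))
  have hn_9_7 : L 9 (v 7) - C 9 < 0 := sub_neg.mpr (hneg 9 7 (by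
    rw [hF9]; simp only [Set.mem_insert_iff, Set.mem_singleton_iff]; decide))
  have hn_10_0 : L 10 (v 0) - C 10 < 0 := sub_neg.mpr (hneg 10 0 (by
    rw [hF10]; simp only [Set.mem_insert_iff, Set.mem_singleton_iff]; decide))
  obtain ⟨h_1, ⟨l0_1, hl0_1⟩, heq_1⟩ := col_dep_aux ![L 0, L 1, L 2, L 3, L 4, L 10] ![C 0, C 1, C 2, C 3, C 4, C 10] ![v 0, v 2, v 4, v 5, v 7, v 10]
  have eR_1_0 : h_1 0 * (L 0 (v 0) - C 0) + h_1 1 * (L 0 (v 2) - C 0) + h_1 2 * (L 0 (v 4) - C 0) + h_1 3 * (L 0 (v 5) - C 0) + h_1 4 * (L 0 (v 7) - C 0) + h_1 5 * (L 0 (v 10) - C 0) = 0 := by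
    have t := heq_1 0
    rw [Fin.sum_univ_six] at t
    exact t
  have e_1_0 : h_1 0 * (L 0 (v 0) - C 0) + h_1 3 * (L 0 (v 5) - C 0) + h_1 5 * (L 0 (v 10) - C 0) = 0 := by linear_combination eR_1_0 - h_1 1 * hq_0_2 - h_1 2 * hq_0_4 - h_1 4 * hq_0_7
  have eR_1_1 : h_1 0 * (L 1 (v 0) - C 1) + h_1 1 * (L 1 (v 2) - C 1) + h_1 2 * (L 1 (v 4) - C 1) + h_1 3 * (L 1 (v 5) - C 1) + h_1 4 * (L 1 (v 7) - C 1) + h_1 5 * (L 1 (v 10) - C 1) = 0 := by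
    have t := heq_1 1
    rw [Fin.sum_univ_six] at t
    exact t
  have e_1_1 : h_1 1 * (L 1 (v 2) - C 1) + h_1 3 * (L 1 (v 5) - C 1) = 0 := by linear_combination eR_1_1 - h_1 0 * hq_1_0 - h_1 2 * hq_1_4 - h_1 4 * hq_1_7 - h_1 5 * hq_1_10
  have eR_1_2 : h_1 0 * (L 2 (v 0) - C 2) + h_1 1 * (L 2 (v 2) - C 2) + h_1 2 * (L 2 (v 4) - C 2) + h_1 3 * (L 2 (v 5) - C 2) + h_1 4 * (L 2 (v 7) - C 2) + h_1 5 * (L 2 (v 10) - C 2) = 0 := by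
    have t := heq_1 2
    rw [Fin.sum_univ_six] at t
    exact t
  have e_1_2 : h_1 1 * (L 2 (v 2) - C 2) + h_1 3 * (L 2 (v 5) - C 2) + h_1 5 * (L 2 (v 10) - C 2) = 0 := by linear_combination eR_1_2 - h_1 0 * hq_2_0 - h_1 2 * hq_2_4 - h_1 4 * hq_2_7
  have eR_1_3 : h_1 0 * (L 3 (v 0) - C 3) + h_1 1 * (L 3 (v 2) - C 3) + h_1 2 * (L 3 (v 4) - C 3) + h_1 3 * (L 3 (v 5) - C 3) + h_1 4 * (L 3 (v 7) - C 3) + h_1 5 * (L 3 (v 10) - C 3) = 0 := by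
    have t := heq_1 3
    rw [Fin.sum_univ_six] at t
    exact t
  have e_1_3 : h_1 0 * (L 3 (v 0) - C 3) + h_1 1 * (L 3 (v 2) - C 3) + h_1 2 * (L 3 (v 4) - C 3) + h_1 4 * (L 3 (v 7) - C 3) = 0 := by linear_combination eR_1_3 - h_1 3 * hq_3_5 - h_1 5 * hq_3_10
  have eR_1_4 : h_1 0 * (L 4 (v 0) - C 4) + h_1 1 * (L 4 (v 2) - C 4) + h_1 2 * (L 4 (v 4) - C 4) + h_1 3 * (L 4 (v 5) - C 4) + h_1 4 * (L 4 (v 7) - C 4) + h_1 5 * (L 4 (v 10) - C 4) = 0 := by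
    have t := heq_1 4
    rw [Fin.sum_univ_six] at t
    exact t
  have e_1_4 : h_1 1 * (L 4 (v 2) - C 4) + h_1 2 * (L 4 (v 4) - C 4) = 0 := by linear_combination eR_1_4 - h_1 0 * hq_4_0 - h_1 3 * hq_4_5 - h_1 4 * hq_4_7 - h_1 5 * hq_4_10
  have eR_1_5 : h_1 0 * (L 10 (v 0) - C 10) + h_1 1 * (L 10 (v 2) - C 10) + h_1 2 * (L 10 (v 4) - C 10) + h_1 3 * (L 10 (v 5) - C 10) + h_1 4 * (L 10 (v 7) - C 10) + h_1 5 * (L 10 (v 10) - C 10) = 0 := by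
    have t := heq_1 5
    rw [Fin.sum_univ_six] at t
    exact t
  have e_1_5 : h_1 0 * (L 10 (v 0) - C 10) = 0 := by linear_combination eR_1_5 - h_1 1 * hq_10_2 - h_1 2 * hq_10_4 - h_1 3 * hq_10_5 - h_1 4 * hq_10_7 - h_1 5 * hq_10_10
  have z0_1 : h_1 0 = 0 := by
    have hx : h_1 0 * (L 10 (v 0) - C 10) = 0 := by linear_combination e_1_5
    exact (mul_eq_zero.mp hx).resolve_right (ne_of_lt hn_10_0)
  have hp_1 : h_1 3 ≠ 0 := by
    intro hp
    have zz1 : h_1 1 = 0 := by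
      have hx : h_1 1 * (L 1 (v 2) - C 1) = 0 := by linear_combination e_1_1 - (L 1 (v 5) - C 1) * hp
      exact (mul_eq_zero.mp hx).resolve_right (ne_of_lt hn_1_2)
    have zz2 : h_1 2 = 0 := by
      have hx : h_1 2 * (L 4 (v 4) - C 4) = 0 := by linear_combination e_1_4 - (L 4 (v 2) - C 4) * zz1
      exact (mul_eq_zero.mp hx).resolve_right (ne_of_lt hn_4_4)
    have zz5 : h_1 5 = 0 := by
      have hx : h_1 5 * (L 0 (v 10) - C 0) = 0 := by linear_combination e_1_0 - (L 0 (v 0) - C 0) * z0_1 - (L 0 (v 5) - C 0) * hp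
      exact (mul_eq_zero.mp hx).resolve_right (ne_of_lt hn_0_10)
    have zz4 : h_1 4 = 0 := by
      have hx : h_1 4 * (L 3 (v 7) - C 3) = 0 := by linear_combination e_1_3 - (L 3 (v 0) - C 3) * z0_1 - (L 3 (v 2) - C 3) * zz1 - (L 3 (v 4) - C 3) * zz2
      exact (mul_eq_zero.mp hx).resolve_right (ne_of_lt hn_3_7)
    exact hl0_1 (by fin_cases l0_1 <;> first | exact z0_1 | exact zz1 | exact zz2 | exact hp | exact zz4 | exact zz5)
  have key_1 : ((L 1 (v 2) - C 1) * (L 2 (v 5) - C 2) * (L 0 (v 10) - C 0) - (L 2 (v 2) - C 2) * (L 1 (v 5) - C 1) * (L 0 (v 10) - C 0) - (L 0 (v 5) - C 0) * (L 1 (v 2) - C 1) * (L 2 (v 10) - C 2)) * h_1 3 = 0 := by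
    linear_combination ((L 1 (v 2) - C 1) * (L 0 (v 10) - C 0)) * e_1_2 - ((L 2 (v 2) - C 2) * (L 0 (v 10) - C 0)) * e_1_1 - ((L 2 (v 10) - C 2) * (L 1 (v 2) - C 1)) * e_1_0 + ((L 2 (v 10) - C 2) * (L 1 (v 2) - C 1) * (L 0 (v 0) - C 0)) * z0_1
  have brk_1 : (L 1 (v 2) - C 1) * (L 2 (v 5) - C 2) * (L 0 (v 10) - C 0) - (L 2 (v 2) - C 2) * (L 1 (v 5) - C 1) * (L 0 (v 10) - C 0) - (L 0 (v 5) - C 0) * (L 1 (v 2) - C 1) * (L 2 (v 10) - C 2) = 0 := (mul_eq_zero.mp key_1).resolve_right hp_1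
  have ineq_1 : (L 0 (v 5) - C 0) * (L 2 (v 10) - C 2) < (L 0 (v 10) - C 0) * (L 2 (v 5) - C 2) :=
    key_ineq1 _ _ _ _ _ _ _ hn_1_2 hn_2_2 hn_1_5 hn_0_10 brk_1
  obtain ⟨h_2, ⟨l0_2, hl0_2⟩, heq_2⟩ := col_dep_aux ![L 0, L 1, L 2, L 4, L 6, L 9] ![C 0, C 1, C 2, C 4, C 6, C 9] ![v 0, v 1, v 3, v 5, v 7, v 10]
  have eR_2_0 : h_2 0 * (L 0 (v 0) - C 0) + h_2 1 * (L 0 (v 1) - C 0) + h_2 2 * (L 0 (v 3) - C 0) + h_2 3 * (L 0 (v 5) - C 0) + h_2 4 * (L 0 (v 7) - C 0) + h_2 5 * (L 0 (v 10) - C 0) = 0 := by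
    have t := heq_2 0
    rw [Fin.sum_univ_six] at t
    exact t
  have e_2_0 : h_2 0 * (L 0 (v 0) - C 0) + h_2 1 * (L 0 (v 1) - C 0) + h_2 2 * (L 0 (v 3) - C 0) + h_2 3 * (L 0 (v 5) - C 0) + h_2 5 * (L 0 (v 10) - C 0) = 0 := by linear_combination eR_2_0 - h_2 4 * hq_0_7
  have eR_2_1 : h_2 0 * (L 1 (v 0) - C 1) + h_2 1 * (L 1 (v 1) - C 1) + h_2 2 * (L 1 (v 3) - C 1) + h_2 3 * (L 1 (v 5) - C 1) + h_2 4 * (L 1 (v 7) - C 1) + h_2 5 * (L 1 (v 10) - C 1) = 0 := by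
    have t := heq_2 1
    rw [Fin.sum_univ_six] at t
    exact t
  have e_2_1 : h_2 1 * (L 1 (v 1) - C 1) + h_2 2 * (L 1 (v 3) - C 1) + h_2 3 * (L 1 (v 5) - C 1) = 0 := by linear_combination eR_2_1 - h_2 0 * hq_1_0 - h_2 4 * hq_1_7 - h_2 5 * hq_1_10
  have eR_2_2 : h_2 0 * (L 2 (v 0) - C 2) + h_2 1 * (L 2 (v 1) - C 2) + h_2 2 * (L 2 (v 3) - C 2) + h_2 3 * (L 2 (v 5) - C 2) + h_2 4 * (L 2 (v 7) - C 2) + h_2 5 * (L 2 (v 10) - C 2) = 0 := by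
    have t := heq_2 2
    rw [Fin.sum_univ_six] at t
    exact t
  have e_2_2 : h_2 1 * (L 2 (v 1) - C 2) + h_2 3 * (L 2 (v 5) - C 2) + h_2 5 * (L 2 (v 10) - C 2) = 0 := by linear_combination eR_2_2 - h_2 0 * hq_2_0 - h_2 2 * hq_2_3 - h_2 4 * hq_2_7
  have eR_2_3 : h_2 0 * (L 4 (v 0) - C 4) + h_2 1 * (L 4 (v 1) - C 4) + h_2 2 * (L 4 (v 3) - C 4) + h_2 3 * (L 4 (v 5) - C 4) + h_2 4 * (L 4 (v 7) - C 4) + h_2 5 * (L 4 (v 10) - C 4) = 0 := by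
    have t := heq_2 3
    rw [Fin.sum_univ_six] at t
    exact t
  have e_2_3 : h_2 1 * (L 4 (v 1) - C 4) = 0 := by linear_combination eR_2_3 - h_2 0 * hq_4_0 - h_2 2 * hq_4_3 - h_2 3 * hq_4_5 - h_2 4 * hq_4_7 - h_2 5 * hq_4_10
  have eR_2_4 : h_2 0 * (L 6 (v 0) - C 6) + h_2 1 * (L 6 (v 1) - C 6) + h_2 2 * (L 6 (v 3) - C 6) + h_2 3 * (L 6 (v 5) - C 6) + h_2 4 * (L 6 (v 7) - C 6) + h_2 5 * (L 6 (v 10) - C 6) = 0 := by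
    have t := heq_2 4
    rw [Fin.sum_univ_six] at t
    exact t
  have e_2_4 : h_2 1 * (L 6 (v 1) - C 6) + h_2 2 * (L 6 (v 3) - C 6) + h_2 3 * (L 6 (v 5) - C 6) + h_2 4 * (L 6 (v 7) - C 6) + h_2 5 * (L 6 (v 10) - C 6) = 0 := by linear_combination eR_2_4 - h_2 0 * hq_6_0
  have eR_2_5 : h_2 0 * (L 9 (v 0) - C 9) + h_2 1 * (L 9 (v 1) - C 9) + h_2 2 * (L 9 (v 3) - C 9) + h_2 3 * (L 9 (v 5) - C 9) + h_2 4 * (L 9 (v 7) - C 9) + h_2 5 * (L 9 (v 10) - C 9) = 0 := by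
    have t := heq_2 5
    rw [Fin.sum_univ_six] at t
    exact t
  have e_2_5 : h_2 3 * (L 9 (v 5) - C 9) + h_2 4 * (L 9 (v 7) - C 9) = 0 := by linear_combination eR_2_5 - h_2 0 * hq_9_0 - h_2 1 * hq_9_1 - h_2 2 * hq_9_3 - h_2 5 * hq_9_10
  have z1_2 : h_2 1 = 0 := by
    have hx : h_2 1 * (L 4 (v 1) - C 4) = 0 := by linear_combination e_2_3
    exact (mul_eq_zero.mp hx).resolve_right (ne_of_lt hn_4_1)
  have hp_2 : h_2 3 ≠ 0 := by
    intro hp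
    have zz2 : h_2 2 = 0 := by
      have hx : h_2 2 * (L 1 (v 3) - C 1) = 0 := by linear_combination e_2_1 - (L 1 (v 1) - C 1) * z1_2 - (L 1 (v 5) - C 1) * hp
      exact (mul_eq_zero.mp hx).resolve_right (ne_of_lt hn_1_3)
    have zz4 : h_2 4 = 0 := by
      have hx : h_2 4 * (L 9 (v 7) - C 9) = 0 := by linear_combination e_2_5 - (L 9 (v 5) - C 9) * hp
      exact (mul_eq_zero.mp hx).resolve_right (ne_of_lt hn_9_7)
    have zz5 : h_2 5 = 0 := by
      have hx : h_2 5 * (L 2 (v 10) - C 2) = 0 := by linear_combination e_2_2 - (L 2 (v 1) - C 2) * z1_2 - (L 2 (v 5) - C 2) * hp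
      exact (mul_eq_zero.mp hx).resolve_right (ne_of_lt hn_2_10)
    have zz0 : h_2 0 = 0 := by
      have hx : h_2 0 * (L 0 (v 0) - C 0) = 0 := by linear_combination e_2_0 - (L 0 (v 1) - C 0) * z1_2 - (L 0 (v 3) - C 0) * zz2 - (L 0 (v 5) - C 0) * hp - (L 0 (v 10) - C 0) * zz5
      exact (mul_eq_zero.mp hx).resolve_right (ne_of_lt hn_0_0)
    exact hl0_2 (by fin_cases l0_2 <;> first | exact zz0 | exact z1_2 | exact zz2 | exact hp | exact zz4 | exact zz5)
  have key_2 : ((L 6 (v 5) - C 6) * (L 1 (v 3) - C 1) * (L 9 (v 7) - C 9) * (L 2 (v 10) - C 2) - (L 6 (v 3) - C 6) * (L 1 (v 5) - C 1) * (L 9 (v 7) - C 9) * (L 2 (v 10) - C 2) - (L 6 (v 7) - C 6) * (L 9 (v 5) - C 9) * (L 1 (v 3) - C 1) * (L 2 (v 10) - C 2) - (L 6 (v 10) - C 6) * (L 2 (v 5) - C 2) * (L 1 (v 3) - C 1) * (L 9 (v 7) - C 9)) * h_2 3 = 0 := by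
    linear_combination ((L 1 (v 3) - C 1) * (L 9 (v 7) - C 9) * (L 2 (v 10) - C 2)) * e_2_4 - ((L 6 (v 3) - C 6) * (L 9 (v 7) - C 9) * (L 2 (v 10) - C 2)) * e_2_1 - ((L 6 (v 7) - C 6) * (L 1 (v 3) - C 1) * (L 2 (v 10) - C 2)) * e_2_5 - ((L 6 (v 10) - C 6) * (L 1 (v 3) - C 1) * (L 9 (v 7) - C 9)) * e_2_2 + (-((L 1 (v 3) - C 1) * (L 9 (v 7) - C 9) * (L 2 (v 10) - C 2) * (L 6 (v 1) - C 6) - (L 6 (v 3) - C 6) * (L 9 (v 7) - C 9) * (L 2 (v 10) - C 2) * (L 1 (v 1) - C 1) - (L 6 (v 10) - C 6) * (L 1 (v 3) - C 1) * (L 9 (v 7) - C 9) * (L 2 (v 1) - C 2))) * z1_2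
  have brk_2 : (L 6 (v 5) - C 6) * (L 1 (v 3) - C 1) * (L 9 (v 7) - C 9) * (L 2 (v 10) - C 2) - (L 6 (v 3) - C 6) * (L 1 (v 5) - C 1) * (L 9 (v 7) - C 9) * (L 2 (v 10) - C 2) - (L 6 (v 7) - C 6) * (L 9 (v 5) - C 9) * (L 1 (v 3) - C 1) * (L 2 (v 10) - C 2) - (L 6 (v 10) - C 6) * (L 2 (v 5) - C 2) * (L 1 (v 3) - C 1) * (L 9 (v 7) - C 9) = 0 := (mul_eq_zero.mp key_2).resolve_right hp_2
  have ineq_2 : (L 2 (v 5) - C 2) * (L 6 (v 10) - C 6) < (L 2 (v 10) - C 2) * (L 6 (v 5) - C 6) :=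
    key_ineq2 _ _ _ _ _ _ _ _ _ _ hn_1_3 hn_9_7 hn_2_10 hn_6_3 hn_1_5 hn_6_7 hn_9_5 brk_2
  obtain ⟨h_3, ⟨l0_3, hl0_3⟩, heq_3⟩ := col_dep_aux ![L 0, L 1, L 2, L 6, L 7, L 8] ![C 0, C 1, C 2, C 6, C 7, C 8] ![v 0, v 1, v 2, v 3, v 5, v 9]
  have eR_3_0 : h_3 0 * (L 0 (v 0) - C 0) + h_3 1 * (L 0 (v 1) - C 0) + h_3 2 * (L 0 (v 2) - C 0) + h_3 3 * (L 0 (v 3) - C 0) + h_3 4 * (L 0 (v 5) - C 0) + h_3 5 * (L 0 (v 9) - C 0) = 0 := by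
    have t := heq_3 0
    rw [Fin.sum_univ_six] at t
    exact t
  have e_3_0 : h_3 0 * (L 0 (v 0) - C 0) + h_3 1 * (L 0 (v 1) - C 0) + h_3 3 * (L 0 (v 3) - C 0) + h_3 4 * (L 0 (v 5) - C 0) = 0 := by linear_combination eR_3_0 - h_3 2 * hq_0_2 - h_3 5 * hq_0_9
  have eR_3_1 : h_3 0 * (L 1 (v 0) - C 1) + h_3 1 * (L 1 (v 1) - C 1) + h_3 2 * (L 1 (v 2) - C 1) + h_3 3 * (L 1 (v 3) - C 1) + h_3 4 * (L 1 (v 5) - C 1) + h_3 5 * (L 1 (v 9) - C 1) = 0 := by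
    have t := heq_3 1
    rw [Fin.sum_univ_six] at t
    exact t
  have e_3_1 : h_3 1 * (L 1 (v 1) - C 1) + h_3 2 * (L 1 (v 2) - C 1) + h_3 3 * (L 1 (v 3) - C 1) + h_3 4 * (L 1 (v 5) - C 1) + h_3 5 * (L 1 (v 9) - C 1) = 0 := by linear_combination eR_3_1 - h_3 0 * hq_1_0
  have eR_3_2 : h_3 0 * (L 2 (v 0) - C 2) + h_3 1 * (L 2 (v 1) - C 2) + h_3 2 * (L 2 (v 2) - C 2) + h_3 3 * (L 2 (v 3) - C 2) + h_3 4 * (L 2 (v 5) - C 2) + h_3 5 * (L 2 (v 9) - C 2) = 0 := by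
    have t := heq_3 2
    rw [Fin.sum_univ_six] at t
    exact t
  have e_3_2 : h_3 1 * (L 2 (v 1) - C 2) + h_3 2 * (L 2 (v 2) - C 2) + h_3 4 * (L 2 (v 5) - C 2) = 0 := by linear_combination eR_3_2 - h_3 0 * hq_2_0 - h_3 3 * hq_2_3 - h_3 5 * hq_2_9
  have eR_3_3 : h_3 0 * (L 6 (v 0) - C 6) + h_3 1 * (L 6 (v 1) - C 6) + h_3 2 * (L 6 (v 2) - C 6) + h_3 3 * (L 6 (v 3) - C 6) + h_3 4 * (L 6 (v 5) - C 6) + h_3 5 * (L 6 (v 9) - C 6) = 0 := by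
    have t := heq_3 3
    rw [Fin.sum_univ_six] at t
    exact t
  have e_3_3 : h_3 1 * (L 6 (v 1) - C 6) + h_3 3 * (L 6 (v 3) - C 6) + h_3 4 * (L 6 (v 5) - C 6) = 0 := by linear_combination eR_3_3 - h_3 0 * hq_6_0 - h_3 2 * hq_6_2 - h_3 5 * hq_6_9
  have eR_3_4 : h_3 0 * (L 7 (v 0) - C 7) + h_3 1 * (L 7 (v 1) - C 7) + h_3 2 * (L 7 (v 2) - C 7) + h_3 3 * (L 7 (v 3) - C 7) + h_3 4 * (L 7 (v 5) - C 7) + h_3 5 * (L 7 (v 9) - C 7) = 0 := by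
    have t := heq_3 4
    rw [Fin.sum_univ_six] at t
    exact t
  have e_3_4 : h_3 0 * (L 7 (v 0) - C 7) + h_3 3 * (L 7 (v 3) - C 7) = 0 := by linear_combination eR_3_4 - h_3 1 * hq_7_1 - h_3 2 * hq_7_2 - h_3 4 * hq_7_5 - h_3 5 * hq_7_9
  have eR_3_5 : h_3 0 * (L 8 (v 0) - C 8) + h_3 1 * (L 8 (v 1) - C 8) + h_3 2 * (L 8 (v 2) - C 8) + h_3 3 * (L 8 (v 3) - C 8) + h_3 4 * (L 8 (v 5) - C 8) + h_3 5 * (L 8 (v 9) - C 8) = 0 := by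
    have t := heq_3 5
    rw [Fin.sum_univ_six] at t
    exact t
  have e_3_5 : h_3 0 * (L 8 (v 0) - C 8) = 0 := by linear_combination eR_3_5 - h_3 1 * hq_8_1 - h_3 2 * hq_8_2 - h_3 3 * hq_8_3 - h_3 4 * hq_8_5 - h_3 5 * hq_8_9
  have z0_3 : h_3 0 = 0 := by
    have hx : h_3 0 * (L 8 (v 0) - C 8) = 0 := by linear_combination e_3_5
    exact (mul_eq_zero.mp hx).resolve_right (ne_of_lt hn_8_0)
  have z3_3 : h_3 3 = 0 := by
    have hx : h_3 3 * (L 7 (v 3) - C 7) = 0 := by linear_combination e_3_4 - (L 7 (v 0) - C 7) * z0_3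
    exact (mul_eq_zero.mp hx).resolve_right (ne_of_lt hn_7_3)
  have hp_3 : h_3 4 ≠ 0 := by
    intro hp
    have zz1 : h_3 1 = 0 := by
      have hx : h_3 1 * (L 0 (v 1) - C 0) = 0 := by linear_combination e_3_0 - (L 0 (v 0) - C 0) * z0_3 - (L 0 (v 3) - C 0) * z3_3 - (L 0 (v 5) - C 0) * hp
      exact (mul_eq_zero.mp hx).resolve_right (ne_of_lt hn_0_1)
    have zz2 : h_3 2 = 0 := by
      have hx : h_3 2 * (L 2 (v 2) - C 2) = 0 := by linear_combination e_3_2 - (L 2 (v 1) - C 2) * zz1 - (L 2 (v 5) - C 2) * hp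
      exact (mul_eq_zero.mp hx).resolve_right (ne_of_lt hn_2_2)
    have zz5 : h_3 5 = 0 := by
      have hx : h_3 5 * (L 1 (v 9) - C 1) = 0 := by linear_combination e_3_1 - (L 1 (v 1) - C 1) * zz1 - (L 1 (v 2) - C 1) * zz2 - (L 1 (v 3) - C 1) * z3_3 - (L 1 (v 5) - C 1) * hp
      exact (mul_eq_zero.mp hx).resolve_right (ne_of_lt hn_1_9)
    exact hl0_3 (by fin_cases l0_3 <;> first | exact z0_3 | exact zz1 | exact zz2 | exact z3_3 | exact hp | exact zz5)
  have key_3 : ((L 0 (v 1) - C 0) * (L 6 (v 5) - C 6) - (L 6 (v 1) - C 6) * (L 0 (v 5) - C 0)) * h_3 4 = 0 := by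
    linear_combination ((L 0 (v 1) - C 0)) * e_3_3 - ((L 6 (v 1) - C 6)) * e_3_0 + ((L 6 (v 1) - C 6) * (L 0 (v 0) - C 0)) * z0_3 + ((L 6 (v 1) - C 6) * (L 0 (v 3) - C 0) - (L 0 (v 1) - C 0) * (L 6 (v 3) - C 6)) * z3_3
  have brk_3 : (L 0 (v 1) - C 0) * (L 6 (v 5) - C 6) - (L 6 (v 1) - C 6) * (L 0 (v 5) - C 0) = 0 := (mul_eq_zero.mp key_3).resolve_right hp_3
  have hXY : (L 0 (v 5) - C 0) * (L 6 (v 1) - C 6) = (L 0 (v 1) - C 0) * (L 6 (v 5) - C 6) := by linear_combination (-1 : ℝ) * brk_3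
  obtain ⟨h_4, ⟨l0_4, hl0_4⟩, heq_4⟩ := col_dep_aux ![L 0, L 1, L 3, L 5, L 6, L 7] ![C 0, C 1, C 3, C 5, C 6, C 7] ![v 0, v 1, v 4, v 6, v 8, v 10]
  have eR_4_0 : h_4 0 * (L 0 (v 0) - C 0) + h_4 1 * (L 0 (v 1) - C 0) + h_4 2 * (L 0 (v 4) - C 0) + h_4 3 * (L 0 (v 6) - C 0) + h_4 4 * (L 0 (v 8) - C 0) + h_4 5 * (L 0 (v 10) - C 0) = 0 := by
    have t := heq_4 0
    rw [Fin.sum_univ_six] at t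
    exact t
  have e_4_0 : h_4 0 * (L 0 (v 0) - C 0) + h_4 1 * (L 0 (v 1) - C 0) + h_4 3 * (L 0 (v 6) - C 0) + h_4 4 * (L 0 (v 8) - C 0) + h_4 5 * (L 0 (v 10) - C 0) = 0 := by linear_combination eR_4_0 - h_4 2 * hq_0_4
  have eR_4_1 : h_4 0 * (L 1 (v 0) - C 1) + h_4 1 * (L 1 (v 1) - C 1) + h_4 2 * (L 1 (v 4) - C 1) + h_4 3 * (L 1 (v 6) - C 1) + h_4 4 * (L 1 (v 8) - C 1) + h_4 5 * (L 1 (v 10) - C 1) = 0 := by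
    have t := heq_4 1
    rw [Fin.sum_univ_six] at t
    exact t
  have e_4_1 : h_4 1 * (L 1 (v 1) - C 1) + h_4 4 * (L 1 (v 8) - C 1) = 0 := by linear_combination eR_4_1 - h_4 0 * hq_1_0 - h_4 2 * hq_1_4 - h_4 3 * hq_1_6 - h_4 5 * hq_1_10
  have eR_4_2 : h_4 0 * (L 3 (v 0) - C 3) + h_4 1 * (L 3 (v 1) - C 3) + h_4 2 * (L 3 (v 4) - C 3) + h_4 3 * (L 3 (v 6) - C 3) + h_4 4 * (L 3 (v 8) - C 3) + h_4 5 * (L 3 (v 10) - C 3) = 0 := by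
    have t := heq_4 2
    rw [Fin.sum_univ_six] at t
    exact t
  have e_4_2 : h_4 0 * (L 3 (v 0) - C 3) + h_4 2 * (L 3 (v 4) - C 3) + h_4 3 * (L 3 (v 6) - C 3) = 0 := by linear_combination eR_4_2 - h_4 1 * hq_3_1 - h_4 4 * hq_3_8 - h_4 5 * hq_3_10
  have eR_4_3 : h_4 0 * (L 5 (v 0) - C 5) + h_4 1 * (L 5 (v 1) - C 5) + h_4 2 * (L 5 (v 4) - C 5) + h_4 3 * (L 5 (v 6) - C 5) + h_4 4 * (L 5 (v 8) - C 5) + h_4 5 * (L 5 (v 10) - C 5) = 0 := by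
    have t := heq_4 3
    rw [Fin.sum_univ_six] at t
    exact t
  have e_4_3 : h_4 0 * (L 5 (v 0) - C 5) = 0 := by linear_combination eR_4_3 - h_4 1 * hq_5_1 - h_4 2 * hq_5_4 - h_4 3 * hq_5_6 - h_4 4 * hq_5_8 - h_4 5 * hq_5_10
  have eR_4_4 : h_4 0 * (L 6 (v 0) - C 6) + h_4 1 * (L 6 (v 1) - C 6) + h_4 2 * (L 6 (v 4) - C 6) + h_4 3 * (L 6 (v 6) - C 6) + h_4 4 * (L 6 (v 8) - C 6) + h_4 5 * (L 6 (v 10) - C 6) = 0 := by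
    have t := heq_4 4
    rw [Fin.sum_univ_six] at t
    exact t
  have e_4_4 : h_4 1 * (L 6 (v 1) - C 6) + h_4 5 * (L 6 (v 10) - C 6) = 0 := by linear_combination eR_4_4 - h_4 0 * hq_6_0 - h_4 2 * hq_6_4 - h_4 3 * hq_6_6 - h_4 4 * hq_6_8
  have eR_4_5 : h_4 0 * (L 7 (v 0) - C 7) + h_4 1 * (L 7 (v 1) - C 7) + h_4 2 * (L 7 (v 4) - C 7) + h_4 3 * (L 7 (v 6) - C 7) + h_4 4 * (L 7 (v 8) - C 7) + h_4 5 * (L 7 (v 10) - C 7) = 0 := by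
    have t := heq_4 5
    rw [Fin.sum_univ_six] at t
    exact t
  have e_4_5 : h_4 0 * (L 7 (v 0) - C 7) + h_4 2 * (L 7 (v 4) - C 7) + h_4 5 * (L 7 (v 10) - C 7) = 0 := by linear_combination eR_4_5 - h_4 1 * hq_7_1 - h_4 3 * hq_7_6 - h_4 4 * hq_7_8
  have z0_4 : h_4 0 = 0 := by
    have hx : h_4 0 * (L 5 (v 0) - C 5) = 0 := by linear_combination e_4_3
    exact (mul_eq_zero.mp hx).resolve_right (ne_of_lt hn_5_0)
  have hp_4 : h_4 1 ≠ 0 := by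
    intro hp
    have zz4 : h_4 4 = 0 := by
      have hx : h_4 4 * (L 1 (v 8) - C 1) = 0 := by linear_combination e_4_1 - (L 1 (v 1) - C 1) * hp
      exact (mul_eq_zero.mp hx).resolve_right (ne_of_lt hn_1_8)
    have zz5 : h_4 5 = 0 := by
      have hx : h_4 5 * (L 6 (v 10) - C 6) = 0 := by linear_combination e_4_4 - (L 6 (v 1) - C 6) * hp
      exact (mul_eq_zero.mp hx).resolve_right (ne_of_lt hn_6_10)
    have zz2 : h_4 2 = 0 := by
      have hx : h_4 2 * (L 7 (v 4) - C 7) = 0 := by linear_combination e_4_5 - (L 7 (v 0) - C 7) * z0_4 - (L 7 (v 10) - C 7) * zz5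
      exact (mul_eq_zero.mp hx).resolve_right (ne_of_lt hn_7_4)
    have zz3 : h_4 3 = 0 := by
      have hx : h_4 3 * (L 3 (v 6) - C 3) = 0 := by linear_combination e_4_2 - (L 3 (v 0) - C 3) * z0_4 - (L 3 (v 4) - C 3) * zz2
      exact (mul_eq_zero.mp hx).resolve_right (ne_of_lt hn_3_6)
    exact hl0_4 (by fin_cases l0_4 <;> first | exact z0_4 | exact hp | exact zz2 | exact zz3 | exact zz4 | exact zz5)
  have key_4 : ((L 0 (v 1) - C 0) * (L 1 (v 8) - C 1) * (L 3 (v 6) - C 3) * (L 7 (v 4) - C 7) * (L 6 (v 10) - C 6) - (L 0 (v 6) - C 0) * (L 3 (v 4) - C 3) * (L 7 (v 10) - C 7) * (L 6 (v 1) - C 6) * (L 1 (v 8) - C 1) - (L 0 (v 8) - C 0) * (L 1 (v 1) - C 1) * (L 3 (v 6) - C 3) * (L 7 (v 4) - C 7) * (L 6 (v 10) - C 6) - (L 0 (v 10) - C 0) * (L 1 (v 8) - C 1) * (L 3 (v 6) - C 3) * (L 7 (v 4) - C 7) * (L 6 (v 1) - C 6)) * h_4 1 = 0 := by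
    linear_combination ((L 1 (v 8) - C 1) * (L 3 (v 6) - C 3) * (L 7 (v 4) - C 7) * (L 6 (v 10) - C 6)) * e_4_0 + (-((L 0 (v 8) - C 0) * (L 3 (v 6) - C 3) * (L 7 (v 4) - C 7) * (L 6 (v 10) - C 6))) * e_4_1 + (-((L 0 (v 6) - C 0) * (L 1 (v 8) - C 1) * (L 7 (v 4) - C 7) * (L 6 (v 10) - C 6))) * e_4_2 + (-((L 0 (v 10) - C 0) * (L 1 (v 8) - C 1) * (L 3 (v 6) - C 3) * (L 7 (v 4) - C 7) + (L 0 (v 6) - C 0) * (L 1 (v 8) - C 1) * (L 3 (v 4) - C 3) * (L 7 (v 10) - C 7))) * e_4_4 + ((L 0 (v 6) - C 0) * (L 1 (v 8) - C 1) * (L 3 (v 4) - C 3) * (L 6 (v 10) - C 6)) * e_4_5 + (-(((L 1 (v 8) - C 1) * (L 3 (v 6) - C 3) * (L 7 (v 4) - C 7) * (L 6 (v 10) - C 6)) * (L 0 (v 0) - C 0) + (-((L 0 (v 6) - C 0) * (L 1 (v 8) - C 1) * (L 7 (v 4) - C 7) * (L 6 (v 10) - C 6))) * (L 3 (v 0)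 - C 3) + ((L 0 (v 6) - C 0) * (L 1 (v 8) - C 1) * (L 3 (v 4) - C 3) * (L 6 (v 10) - C 6)) * (L 7 (v 0) - C 7))) * z0_4
  have brk_4 : (L 0 (v 1) - C 0) * (L 1 (v 8) - C 1) * (L 3 (v 6) - C 3) * (L 7 (v 4) - C 7) * (L 6 (v 10) - C 6) - (L 0 (v 6) - C 0) * (L 3 (v 4) - C 3) * (L 7 (v 10) - C 7) * (L 6 (v 1) - C 6) * (L 1 (v 8) - C 1) - (L 0 (v 8) - C 0) * (L 1 (v 1) - C 1) * (L 3 (v 6) - C 3) * (L 7 (v 4) - C 7) * (L 6 (v 10) - C 6) - (L 0 (v 10) - C 0) * (L 1 (v 8) - C 1) * (L 3 (v 6) - C 3) * (L 7 (v 4) - C 7) * (L 6 (v 1) - C 6) = 0 := (mul_eq_zero.mp key_4).resolve_right hp_4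
  have ineq_4 : (L 0 (v 10) - C 0) * (L 6 (v 1) - C 6) < (L 0 (v 1) - C 0) * (L 6 (v 10) - C 6) :=
    key_ineq4 _ _ _ _ _ _ _ _ _ _ _ _ hn_1_8 hn_3_6 hn_7_4 hn_0_6 hn_3_4 hn_7_10 hn_6_1 hn_0_8 hn_1_1 hn_6_10 brk_4
  have P1 : 0 < (L 0 (v 5) - C 0) * (L 2 (v 10) - C 2) := mul_pos_of_neg_of_neg hn_0_5 hn_2_10
  have P2 : 0 < (L 2 (v 5) - C 2) * (L 6 (v 10) - C 6) := mul_pos_of_neg_of_neg hn_2_5 hn_6_10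
  have P3 : 0 < (L 0 (v 10) - C 0) * (L 6 (v 1) - C 6) := mul_pos_of_neg_of_neg hn_0_10 hn_6_1
  have c1 := mul_lt_mul'' ineq_1 ineq_2 P1.le P2.le
  have c2 := mul_lt_mul'' c1 ineq_4 (mul_pos P1 P2).le P3.le
  have hEq : (L 0 (v 10) - C 0) * (L 2 (v 5) - C 2) * ((L 2 (v 10) - C 2) * (L 6 (v 5) - C 6)) * ((L 0 (v 1) - C 0) * (L 6 (v 10) - C 6)) = (L 0 (v 5) - C 0) * (L 2 (v 10) - C 2) * ((L 2 (v 5) - C 2) * (L 6 (v 10) - C 6)) * ((L 0 (v 10) - C 0) * (L 6 (v 1) - C 6)) := by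
    linear_combination (-((L 0 (v 10) - C 0) * (L 2 (v 5) - C 2) * (L 2 (v 10) - C 2) * (L 6 (v 10) - C 6))) * hXY
  rw [hEq] at c2
  exact lt_irrefl _ c2
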